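/- arXiv:1008.3032 — 5 statements merged into one kernel-verified Lean document; each statement's English description precedes it below -/
import Mathlib

section
/- For every integer p ≥ 0 and every real z with 0 ≤ z < 1, one has (1+z)(1 − z^{2p+2}) − 2z(1 − (p+1)z^{2p} + p·z^{2p+2}) > 0. -/
theorem stmt1 (p : ℕ) (z : ℝ) (hz0 : 0 ≤ z) (hz1 : z < 1) :
    0 < (1 + z) * (1 - z ^ (2 * p + 2))
      - 2 * z * (1 - (p + 1) * z ^ (2 * p) + p * z ^ (2 * p + 2)) := by
  have key : (1 + z) * (1 - z ^ (2 * p + 2))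
      - 2 * z * (1 - (p + 1) * z ^ (2 * p) + p * z ^ (2 * p + 2))
      = (1 - z) * (1 + z ^ (2 * p + 1) * ((2 * p + 1) * z + (2 * p + 2))) := by
    ring
  rw [key]
  have h1 : 0 < 1 - z := by linarith
  have h2 : (0:ℝ) ≤ z ^ (2 * p + 1) * ((2 * p + 1) * z + (2 * p + 2)) := by
    positivity
  nlinarith
end

section
/- Let p ≥ 0 be an integer and define B(λ,μ) = (λ^{p+1} − μ^{p+1})/(λ−μ) for λ ≠ μ and B(λ,λ) = (p+1)λ^p. Then for all λ ≥ 0, μ ≥ 0 with λ² + μ² > 0, B(λ,μ) + 2·∂_λB(λ,μ)·(λ − √(λμ)) > 0. -/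
/-!
For `n = p + 1`, `B(·, y)` is the polynomial `G(x) = ∑_{i<n} x^i y^(n-1-i)`. Differentiating
`G(x)(x - y) = x^n - y^n` gives `G + G'·(x - y) = n x^(n-1)`. Since `G' ≥ 0` on the positive quadrant
and `x - √(xy) ≥ (x - y)/2` by AM-GM, the expression is at least `(p+1) x^p`, which is positive for
`x > 0`; at `x = 0` it reduces to `B(0, y) = y^p > 0`.
-/

open Finset

section GeomSum

variable (n : ℕ) (y x : ℝ)

theorem hasDerivAt_geom_sum₂ :
    HasDerivAt (fun t => ∑ i ∈ range n, t ^ i * y ^ (n - 1 - i))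
      (∑ i ∈ range n, (i : ℝ) * x ^ (i - 1) * y ^ (n - 1 - i)) x := by
  refine HasDerivAt.fun_sum fun i _ => ?_
  simpa [mul_assoc] using (hasDerivAt_pow i x).mul_const (y ^ (n - 1 - i))

theorem geom_sum₂_add_deriv_mul_sub :
    ∑ i ∈ range n, x ^ i * y ^ (n - 1 - i)
        + (∑ i ∈ range n, (i : ℝ) * x ^ (i - 1) * y ^ (n - 1 - i)) * (x - y)
      = n * x ^ (n - 1) := by
  have hprod := (hasDerivAt_geom_sum₂ n y x).fun_mul ((hasDerivAt_id' x).sub_const y)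
  have hpow := (hasDerivAt_pow n x).sub_const (y ^ n)
  have hfun : (fun t => (∑ i ∈ range n, t ^ i * y ^ (n - 1 - i)) * (t - y))
      = fun t => t ^ n - y ^ n := funext fun t => geom_sum₂_mul t y n
  rw [hfun] at hprod
  linear_combination hprod.unique hpow

end GeomSum

theorem half_sub_le_sub_sqrt_mul {l m : ℝ} (hl : 0 ≤ l) (hm : 0 ≤ m) :
    (l - m) / 2 ≤ l - Real.sqrt (l * m) := by
  have : Real.sqrt (l * m) ≤ (l + m) / 2 :=
    Real.sqrt_le_iff.mpr ⟨by positivity, by nlinarith [sq_nonneg (l - m)]⟩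
  linarith

theorem eq_geom_sum₂_of_eq_ite {p : ℕ} {B : ℝ → ℝ → ℝ}
    (hB : ∀ l m : ℝ, B l m =
      if l = m then (p + 1) * l ^ p else (l ^ (p + 1) - m ^ (p + 1)) / (l - m)) (m : ℝ) :
    (fun x => B x m) = fun x => ∑ i ∈ range (p + 1), x ^ i * m ^ (p + 1 - 1 - i) := by
  funext x
  rw [hB]
  split_ifs with hxm
  · subst hxm
    rw [geom_sum₂_self]
    push_cast
    ring_nf
  · rw [div_eq_iff (sub_ne_zero.mpr hxm), geom_sum₂_mul]

theorem stmt3 (p : ℕ) (B : ℝ → ℝ → ℝ)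
    (hB : ∀ l m : ℝ, B l m =
      if l = m then (p + 1) * l ^ p else (l ^ (p + 1) - m ^ (p + 1)) / (l - m))
    (l m : ℝ) (hl : 0 ≤ l) (hm : 0 ≤ m) (hlm : 0 < l ^ 2 + m ^ 2) :
    0 < B l m + 2 * deriv (fun x => B x m) l * (l - Real.sqrt (l * m)) := by
  have hB_eq := eq_geom_sum₂_of_eq_ite hB m
  rw [show B l m = _ from congrFun hB_eq l, hB_eq, (hasDerivAt_geom_sum₂ _ m l).deriv]
  rcases hl.eq_or_lt with rfl | hl_pos
  · have hm_pos : 0 < m := by nlinarith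
    simp [sum_range_succ', pow_pos hm_pos]
  · have hderiv_nonneg : 0 ≤ ∑ i ∈ range (p + 1), (i : ℝ) * l ^ (i - 1) * m ^ (p + 1 - 1 - i) :=
      sum_nonneg fun i _ => by positivity
    have hid := geom_sum₂_add_deriv_mul_sub (p + 1) m l
    have hpow : 0 < ((p + 1 : ℕ) : ℝ) * l ^ (p + 1 - 1) := by positivity
    linarith [mul_le_mul_of_nonneg_left (half_sub_le_sub_sqrt_mul hl hm) hderiv_nonneg]
end

section
/- Let n ≥ 1, τ, ε > 0, and let V_X : ℝ → ℝ (X ∈ ℤⁿ) be C¹ with divided differences B_X(λ,μ). Suppose ψ : ℤⁿ × ℤ → ℂ^N has ψ^t ∈ ℓ²(ℤⁿ) for all t and satisfies the Strauss–Vazquez scheme (ψ_X^{t+1} − 2ψ_X^t + ψ_X^{t−1})/τ² = ∑_{j=1}^n (ψ_{X+e_j}^t − 2ψ_X^t + ψ_{X−e_j}^t)/ε² − B_X(|ψ_X^{t+1}|², |ψ_X^{t−1}|²)(ψ_X^{t+1} + ψ_X^{t−1}). Then the discrete energy E^t = εⁿ ∑_X [ (1/τ² − n/ε²)|ψ_X^{t+1}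 − ψ_X^t|²/2 + ∑_{j=1}^n ∑_± |ψ_X^{t+1} − ψ_{X±e_j}^t|²/(4ε²) + (V_X(|ψ_X^{t+1}|²) + V_X(|ψ_X^t|²))/2 ] satisfies E^t = E^{t−1} for all t ∈ ℤ. -/
/-!
Pair the scheme at site `X` with `ψ^{t+1}_X - ψ^{t-1}_X`. The time difference and the bonds to
`X ± e_j` each telescope into a difference of squared norms, and the divided difference turns the
nonlinear term into `V_X(|ψ^{t+1}_X|²) - V_X(|ψ^{t-1}_X|²)`; this identifies the energy density at
time `t` with one that agrees with the density at time `t - 1` except that the bond terms pair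
`ψ^{t-1}` at `X` with `ψ^t` at `X ± e_j` instead of the other way round. Shifting the summation
variable by `± e_j` exchanges the two, so the lattice sums agree.
-/

open scoped InnerProductSpace

section Pointwise

variable {E : Type*} [NormedAddCommGroup E] [InnerProductSpace ℝ E]

lemma real_inner_sub_sub_eq (a b c p : E) :
    ⟪p - b, a - c⟫_ℝ = ((‖a - b‖ ^ 2 - ‖c - b‖ ^ 2) - (‖a - p‖ ^ 2 - ‖c - p‖ ^ 2)) / 2 := by
  simp only [norm_sub_sq_real, inner_sub_left, inner_sub_right, real_inner_comm]
  ring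

lemma real_inner_second_difference (a b c : E) :
    ⟪a - (2 : ℝ) • b + c, a - c⟫_ℝ = ‖a - b‖ ^ 2 - ‖b - c‖ ^ 2 := by
  simp only [norm_sub_sq_real, inner_sub_left, inner_add_left, inner_sub_right,
    inner_smul_left, real_inner_comm, RCLike.conj_to_real, real_inner_self_eq_norm_sq]
  ring

lemma divided_difference_mul_sub (f : ℝ → ℝ) (d l m : ℝ) :
    (if l = m then d else (f l - f m) / (l - m)) * (l - m) = f l - f m := by
  split_ifs with h
  · simp [h]
  · exact div_mul_cancel₀ _ (sub_ne_zero_of_ne h)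

/-- Local energy balance of one step of the scheme at a single site: `a, b, c` are the values at
times `t + 1, t, t - 1`, and `p j, m j` the values at time `t` at the neighbours `X ± e_j`. -/
lemma strauss_vazquez_local_balance {ι : Type*} [Fintype ι] (τ ε β Va Vb Vc : ℝ)
    (a b c : E) (p m : ι → E)
    (hs : (τ ^ 2)⁻¹ • (a - (2 : ℝ) • b + c)
        = (ε ^ 2)⁻¹ • (∑ j, (p j - (2 : ℝ) • b + m j)) - β • (a + c))
    (hβ : β * (‖a‖ ^ 2 - ‖c‖ ^ 2) = Va - Vc) :
    (1 / τ ^ 2 - Fintype.card ι / ε ^ 2) * ‖a - b‖ ^ 2 / 2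
        + (∑ j, (‖a - p j‖ ^ 2 + ‖a - m j‖ ^ 2)) / (4 * ε ^ 2) + (Va + Vb) / 2
      = (1 / τ ^ 2 - Fintype.card ι / ε ^ 2) * ‖b - c‖ ^ 2 / 2
        + (∑ j, (‖c - p j‖ ^ 2 + ‖c - m j‖ ^ 2)) / (4 * ε ^ 2) + (Vb + Vc) / 2 := by
  have hpair := congrArg (fun v => ⟪v, a - c⟫_ℝ) hs
  have hac : ⟪a + c, a - c⟫_ℝ = ‖a‖ ^ 2 - ‖c‖ ^ 2 := by
    rw [inner_add_left, inner_sub_right, inner_sub_right, real_inner_self_eq_norm_sq,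
      real_inner_self_eq_norm_sq, real_inner_comm]
    ring
  have hbond : ∀ j, ⟪p j - (2 : ℝ) • b + m j, a - c⟫_ℝ
      = (‖a - b‖ ^ 2 - ‖b - c‖ ^ 2)
        - ((‖a - p j‖ ^ 2 + ‖a - m j‖ ^ 2) - (‖c - p j‖ ^ 2 + ‖c - m j‖ ^ 2)) / 2 := by
    intro j
    rw [show p j - (2 : ℝ) • b + m j = (p j - b) + (m j - b) by module, inner_add_left,
      real_inner_sub_sub_eq, real_inner_sub_sub_eq, norm_sub_rev c b]
    ring
  simp only [inner_smul_left, inner_sub_left, real_inner_second_difference, hac, sum_inner,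
    hbond, RCLike.conj_to_real] at hpair
  simp only [Finset.sum_sub_distrib, ← Finset.sum_div, Finset.sum_const, Finset.card_univ,
    nsmul_eq_mul] at hpair
  linear_combination (1 / 2 : ℝ) * hpair - (1 / 2 : ℝ) * hβ

end Pointwise

lemma summable_norm_sub_sq {α E : Type*} [SeminormedAddCommGroup E] {φ χ : α → E}
    (hφ : Summable fun X => ‖φ X‖ ^ 2) (hχ : Summable fun X => ‖χ X‖ ^ 2) :
    Summable fun X => ‖φ X - χ X‖ ^ 2 := by
  refine Summable.of_nonneg_of_le (fun X => by positivity) (fun X => ?_) ((hφ.add hχ).mul_left 2)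
  calc ‖φ X - χ X‖ ^ 2 ≤ (‖φ X‖ + ‖χ X‖) ^ 2 := by gcongr; exact norm_sub_le _ _
    _ ≤ 2 * (‖φ X‖ ^ 2 + ‖χ X‖ ^ 2) := add_sq_le

section LatticeSums

variable {G E : Type*} [AddGroup G] [SeminormedAddCommGroup E]

lemma tsum_norm_sub_shift_sq_comm (φ χ : G → E) (v : G) :
    ∑' X, ‖χ X - φ (X + v)‖ ^ 2 = ∑' X, ‖φ X - χ (X - v)‖ ^ 2 := by
  rw [← (Equiv.addRight v).tsum_eq (fun X => ‖φ X - χ (X - v)‖ ^ 2)]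
  simp [norm_sub_rev]

variable {φ χ : G → E}

lemma summable_norm_sub_comp_add_sq (hφ : Summable fun X => ‖φ X‖ ^ 2)
    (hχ : Summable fun X => ‖χ X‖ ^ 2) (v : G) : Summable fun X => ‖χ X - φ (X + v)‖ ^ 2 :=
  summable_norm_sub_sq hχ <| (Equiv.addRight v).summable_iff (f := fun X => ‖φ X‖ ^ 2) |>.2 hφ

lemma summable_norm_sub_comp_sub_sq (hφ : Summable fun X => ‖φ X‖ ^ 2)
    (hχ : Summable fun X => ‖χ X‖ ^ 2) (v : G) : Summable fun X => ‖χ X - φ (X - v)‖ ^ 2 :=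
  summable_norm_sub_sq hχ <| (Equiv.subRight v).summable_iff (f := fun X => ‖φ X‖ ^ 2) |>.2 hφ

lemma summable_bond_sq (hφ : Summable fun X => ‖φ X‖ ^ 2) (hχ : Summable fun X => ‖χ X‖ ^ 2)
    (v : G) : Summable fun X => ‖χ X - φ (X + v)‖ ^ 2 + ‖χ X - φ (X - v)‖ ^ 2 :=
  (summable_norm_sub_comp_add_sq hφ hχ v).add (summable_norm_sub_comp_sub_sq hφ hχ v)

/-- Summation by parts for the bond energy: exchanging the roles of the two time levels `φ, χ`
amounts to a translation of the lattice. -/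
lemma tsum_bond_energy_comm {ι : Type*} [Fintype ι] (e : ι → G)
    (hφ : Summable fun X => ‖φ X‖ ^ 2) (hχ : Summable fun X => ‖χ X‖ ^ 2) :
    ∑' X, ∑ j, (‖χ X - φ (X + e j)‖ ^ 2 + ‖χ X - φ (X - e j)‖ ^ 2)
      = ∑' X, ∑ j, (‖φ X - χ (X + e j)‖ ^ 2 + ‖φ X - χ (X - e j)‖ ^ 2) := by
  rw [Summable.tsum_finsetSum fun j _ => summable_bond_sq hφ hχ (e j),
    Summable.tsum_finsetSum fun j _ => summable_bond_sq hχ hφ (e j)]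
  refine Finset.sum_congr rfl fun j _ => ?_
  rw [(summable_norm_sub_comp_add_sq hφ hχ _).tsum_add (summable_norm_sub_comp_sub_sq hφ hχ _),
    (summable_norm_sub_comp_add_sq hχ hφ _).tsum_add (summable_norm_sub_comp_sub_sq hχ hφ _),
    tsum_norm_sub_shift_sq_comm, ← tsum_norm_sub_shift_sq_comm χ φ, add_comm]

end LatticeSums

lemma tsum_add_add_congr {α : Type*} {f g₁ g₂ h : α → ℝ} (hf : Summable f) (hg₁ : Summable g₁)
    (hg₂ : Summable g₂) (hh : Summable h) (hg : ∑' x, g₁ x = ∑' x, g₂ x) :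
    ∑' x, (f x + g₁ x + h x) = ∑' x, (f x + g₂ x + h x) := by
  rw [(hf.add hg₁).tsum_add hh, (hf.add hg₂).tsum_add hh, hf.tsum_add hg₁, hf.tsum_add hg₂, hg]

theorem stmt12_general (n N : ℕ) (τ ε : ℝ) (V : (Fin n → ℤ) → ℝ → ℝ)
    (B : (Fin n → ℤ) → ℝ → ℝ → ℝ)
    (hB : ∀ X (l m : ℝ), B X l m =
      if l = m then deriv (V X) l else (V X l - V X m) / (l - m))
    (ψ : ℤ → (Fin n → ℤ) → EuclideanSpace ℂ (Fin N))
    (hl2 : ∀ t : ℤ, Summable fun X : Fin n → ℤ => ‖ψ t X‖ ^ 2)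
    (hVsum : ∀ t : ℤ, Summable fun X : Fin n → ℤ => V X (‖ψ t X‖ ^ 2))
    (hscheme : ∀ (t : ℤ) (X : Fin n → ℤ),
      (τ ^ 2)⁻¹ • (ψ (t + 1) X - (2 : ℝ) • ψ t X + ψ (t - 1) X)
        = (ε ^ 2)⁻¹ • (∑ j : Fin n,
            (ψ t (X + Pi.single j 1) - (2 : ℝ) • ψ t X + ψ t (X - Pi.single j 1)))
          - B X (‖ψ (t + 1) X‖ ^ 2) (‖ψ (t - 1) X‖ ^ 2)
              • (ψ (t + 1) X + ψ (t - 1) X))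
    (E : ℤ → ℝ)
    (hE : ∀ t : ℤ, E t = ε ^ n * ∑' X : Fin n → ℤ,
      ((1 / τ ^ 2 - n / ε ^ 2) * ‖ψ (t + 1) X - ψ t X‖ ^ 2 / 2
        + (∑ j : Fin n, (‖ψ (t + 1) X - ψ t (X + Pi.single j 1)‖ ^ 2
            + ‖ψ (t + 1) X - ψ t (X - Pi.single j 1)‖ ^ 2)) / (4 * ε ^ 2)
        + (V X (‖ψ (t + 1) X‖ ^ 2) + V X (‖ψ t X‖ ^ 2)) / 2)) :
    ∀ t : ℤ, E t = E (t - 1) := by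
  intro t
  rw [hE, hE, sub_add_cancel]
  congr 1
  have hlocal := fun X => strauss_vazquez_local_balance (Vb := V X (‖ψ t X‖ ^ 2))
    (hs := hscheme t X) (hβ := by rw [hB]; exact divided_difference_mul_sub (V X) _ _ _)
  simp only [Fintype.card_fin] at hlocal
  rw [tsum_congr hlocal]
  refine tsum_add_add_congr
    (((summable_norm_sub_sq (hl2 t) (hl2 (t - 1))).mul_left _).div_const _)
    ((summable_sum fun j _ => summable_bond_sq (hl2 t) (hl2 (t - 1)) _).div_const _)
    ((summable_sum fun j _ => summable_bond_sq (hl2 (t - 1)) (hl2 t) _).div_const _)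
    (((hVsum t).add (hVsum (t - 1))).div_const _) ?_
  rw [tsum_div_const, tsum_div_const, tsum_bond_energy_comm _ (hl2 t) (hl2 (t - 1))]

theorem stmt12 (n N : ℕ) (hn : 1 ≤ n) (hN : 1 ≤ N)
    (τ ε : ℝ) (hτ : 0 < τ) (hε : 0 < ε)
    (V : (Fin n → ℤ) → ℝ → ℝ) (hV : ∀ X, ContDiff ℝ 1 (V X))
    (B : (Fin n → ℤ) → ℝ → ℝ → ℝ)
    (hB : ∀ X (l m : ℝ), B X l m =
      if l = m then deriv (V X) l else (V X l - V X m) / (l - m))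
    (ψ : ℤ → (Fin n → ℤ) → EuclideanSpace ℂ (Fin N))
    (hl2 : ∀ t : ℤ, Summable fun X : Fin n → ℤ => ‖ψ t X‖ ^ 2)
    (hVsum : ∀ t : ℤ, Summable fun X : Fin n → ℤ => V X (‖ψ t X‖ ^ 2))
    (hscheme : ∀ (t : ℤ) (X : Fin n → ℤ),
      (τ ^ 2)⁻¹ • (ψ (t + 1) X - (2 : ℝ) • ψ t X + ψ (t - 1) X)
        = (ε ^ 2)⁻¹ • (∑ j : Fin n,
            (ψ t (X + Pi.single j 1) - (2 : ℝ) • ψ t X + ψ t (X - Pi.single j 1)))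
          - B X (‖ψ (t + 1) X‖ ^ 2) (‖ψ (t - 1) X‖ ^ 2)
              • (ψ (t + 1) X + ψ (t - 1) X))
    (E : ℤ → ℝ)
    (hE : ∀ t : ℤ, E t = ε ^ n * ∑' X : Fin n → ℤ,
      ((1 / τ ^ 2 - n / ε ^ 2) * ‖ψ (t + 1) X - ψ t X‖ ^ 2 / 2
        + (∑ j : Fin n, (‖ψ (t + 1) X - ψ t (X + Pi.single j 1)‖ ^ 2
            + ‖ψ (t + 1) X - ψ t (X - Pi.single j 1)‖ ^ 2)) / (4 * ε ^ 2)
        + (V X (‖ψ (t + 1) X‖ ^ 2) + V X (‖ψ t X‖ ^ 2)) / 2)) :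
    ∀ t : ℤ, E t = E (t - 1) :=
  stmt12_general n N τ ε V B hB ψ hl2 hVsum hscheme E hE
end

section
/- Assume τ/ε = 1/√n. Let ψ : ℤⁿ × ℤ → ℂ^N with ψ^t ∈ ℓ²(ℤⁿ) for all t satisfy (ψ_X^{t+1} + ψ_X^{t−1})(1 + τ² B_X(|ψ_X^{t+1}|², |ψ_X^{t−1}|²)) = (1/n) ∑_{j=1}^n (ψ_{X+e_j}^t + ψ_{X−e_j}^t), where each B_X takes real values. Then the discrete charge Q^t = (i εⁿ/(4τ)) ∑_X ∑_{j=1}^n [ conj(ψ_{X+e_j}^t)·ψ_X^{t+1} + conj(ψ_{X−e_j}^t)·ψ_X^{t+1} − conj(ψ_X^{t+1})·ψ_{X+e_j}^t − conj(ψ_X^{t+1})·ψ_{X−e_j}^t ] satisfies Q^t = Q^{t−1} for all t ∈ ℤ. -/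
/-!
The scheme says that the neighbour sum `L ψᵗ` is a real multiple `r • (ψᵗ⁺¹ + ψᵗ⁻¹)`, and `Qᵗ` is,
up to a constant, `∑_X (⟪L ψᵗ, ψᵗ⁺¹⟫ - ⟪ψᵗ⁺¹, L ψᵗ⟫)`. For `w = r • (a + b)` with `r` real one has
`⟪w, a⟫ - ⟪a, w⟫ = ⟪b, w⟫ - ⟪w, b⟫`, since the diagonal terms `⟪a, a⟫`, `⟪b, b⟫` cancel. Hence
the summand of `Qᵗ` equals `⟪ψᵗ⁻¹, L ψᵗ⟫ - ⟪L ψᵗ, ψᵗ⁻¹⟫`, and as `L` is self-adjoint on `ℓ²`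
(a translation of the summation index) its sum is that of `Qᵗ⁻¹`.
-/

open scoped InnerProductSpace

section NeighborSum

variable {G ι 𝕜 E : Type*} [AddCommGroup G] [Fintype ι] [RCLike 𝕜]
  [NormedAddCommGroup E] [InnerProductSpace 𝕜 E]

def neighborSum (e : ι → G) (f : G → E) (X : G) : E :=
  ∑ j, (f (X + e j) + f (X - e j))

theorem summable_inner_of_summable_norm_sq {α : Type*} {f g : α → E}
    (hf : Summable fun X => ‖f X‖ ^ 2) (hg : Summable fun X => ‖g X‖ ^ 2) :
    Summable fun X => ⟪f X, g X⟫_𝕜 := by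
  refine Summable.of_norm_bounded (hf.add hg) fun X => ?_
  calc ‖⟪f X, g X⟫_𝕜‖ ≤ ‖f X‖ * ‖g X‖ := norm_inner_le_norm _ _
    _ ≤ ‖f X‖ ^ 2 + ‖g X‖ ^ 2 := by nlinarith [sq_nonneg (‖f X‖ - ‖g X‖)]

theorem summable_norm_sq_comp_add_right {f : G → E} (hf : Summable fun X => ‖f X‖ ^ 2) (v : G) :
    Summable fun X => ‖f (X + v)‖ ^ 2 :=
  (Equiv.addRight v).summable_iff (f := fun X => ‖f X‖ ^ 2) |>.mpr hf

theorem summable_norm_sq_comp_sub_right {f : G → E} (hf : Summable fun X => ‖f X‖ ^ 2) (v : G) :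
    Summable fun X => ‖f (X - v)‖ ^ 2 :=
  (Equiv.subRight v).summable_iff (f := fun X => ‖f X‖ ^ 2) |>.mpr hf

theorem tsum_inner_comp_add_right (f g : G → E) (v : G) :
    ∑' X, ⟪f (X + v), g X⟫_𝕜 = ∑' X, ⟪f X, g (X - v)⟫_𝕜 := by
  simpa only [Equiv.coe_addRight, add_sub_cancel_right] using
    (Equiv.addRight v).tsum_eq fun X => ⟪f X, g (X - v)⟫_𝕜

variable (e : ι → G)

theorem inner_neighborSum_left (f : G → E) (u : E) (X : G) :
    ⟪neighborSum e f X, u⟫_𝕜 = ∑ j, (⟪f (X + e j), u⟫_𝕜 + ⟪f (X - e j), u⟫_𝕜) := by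
  simp only [neighborSum, sum_inner, inner_add_left]

theorem inner_neighborSum_right (u : E) (f : G → E) (X : G) :
    ⟪u, neighborSum e f X⟫_𝕜 = ∑ j, (⟪u, f (X - e j)⟫_𝕜 + ⟪u, f (X + e j)⟫_𝕜) := by
  simp only [neighborSum, inner_sum, inner_add_right, add_comm]

theorem summable_inner_neighborSum_right {f g : G → E} (hf : Summable fun X => ‖f X‖ ^ 2)
    (hg : Summable fun X => ‖g X‖ ^ 2) :
    Summable fun X => ⟪f X, neighborSum e g X⟫_𝕜 := by
  simp only [inner_neighborSum_right]
  exact summable_sum fun j _ =>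
    (summable_inner_of_summable_norm_sq hf (summable_norm_sq_comp_sub_right hg _)).add
      (summable_inner_of_summable_norm_sq hf (summable_norm_sq_comp_add_right hg _))

theorem summable_inner_neighborSum_left {f g : G → E} (hf : Summable fun X => ‖f X‖ ^ 2)
    (hg : Summable fun X => ‖g X‖ ^ 2) :
    Summable fun X => ⟪neighborSum e f X, g X⟫_𝕜 := by
  simp only [inner_neighborSum_left]
  exact summable_sum fun j _ =>
    (summable_inner_of_summable_norm_sq (summable_norm_sq_comp_add_right hf _) hg).add
      (summable_inner_of_summable_norm_sq (summable_norm_sq_comp_sub_right hf _) hg)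

theorem tsum_inner_neighborSum_left {f g : G → E} (hf : Summable fun X => ‖f X‖ ^ 2)
    (hg : Summable fun X => ‖g X‖ ^ 2) :
    ∑' X, ⟪neighborSum e f X, g X⟫_𝕜 = ∑' X, ⟪f X, neighborSum e g X⟫_𝕜 := by
  have hshift (v : G) : Summable fun X => ⟪f (X + v), g X⟫_𝕜 :=
    summable_inner_of_summable_norm_sq (summable_norm_sq_comp_add_right hf v) hg
  have hshift' (v : G) : Summable fun X => ⟪f X, g (X + v)⟫_𝕜 :=
    summable_inner_of_summable_norm_sq hf (summable_norm_sq_comp_add_right hg v)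
  simp only [inner_neighborSum_left, inner_neighborSum_right, sub_eq_add_neg]
  rw [Summable.tsum_finsetSum fun j _ => (hshift _).add (hshift _),
    Summable.tsum_finsetSum fun j _ => (hshift' _).add (hshift' _)]
  refine Finset.sum_congr rfl fun j _ => ?_
  rw [(hshift _).tsum_add (hshift _), (hshift' _).tsum_add (hshift' _),
    tsum_inner_comp_add_right, tsum_inner_comp_add_right]
  simp only [sub_eq_add_neg, neg_neg]

theorem inner_sub_inner_real_smul_add (r : ℝ) (a b : E) :
    ⟪(r : 𝕜) • (a + b), a⟫_𝕜 - ⟪a, (r : 𝕜) • (a + b)⟫_𝕜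
      = ⟪b, (r : 𝕜) • (a + b)⟫_𝕜 - ⟪(r : 𝕜) • (a + b), b⟫_𝕜 := by
  simp only [inner_smul_left, inner_smul_right, inner_add_left, inner_add_right, RCLike.conj_ofReal]
  ring

theorem sum_inner_sub_inner_eq_neighborSum (f : G → E) (u : E) (X : G) :
    ∑ j, (⟪f (X + e j), u⟫_𝕜 + ⟪f (X - e j), u⟫_𝕜 - ⟪u, f (X + e j)⟫_𝕜 - ⟪u, f (X - e j)⟫_𝕜)
      = ⟪neighborSum e f X, u⟫_𝕜 - ⟪u, neighborSum e f X⟫_𝕜 := by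
  rw [inner_neighborSum_left, inner_neighborSum_right, ← Finset.sum_sub_distrib]
  exact Finset.sum_congr rfl fun j _ => by ring

theorem tsum_charge_eq_of_neighborSum_eq_smul {prev cur next : G → E}
    (hprev : Summable fun X => ‖prev X‖ ^ 2) (hcur : Summable fun X => ‖cur X‖ ^ 2)
    (r : G → ℝ) (hL : ∀ X, neighborSum e cur X = (r X : 𝕜) • (next X + prev X)) :
    ∑' X, (⟪neighborSum e cur X, next X⟫_𝕜 - ⟪next X, neighborSum e cur X⟫_𝕜)
      = ∑' X, (⟪neighborSum e prev X, cur X⟫_𝕜 - ⟪cur X, neighborSum e prev X⟫_𝕜) := calc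
  _ = ∑' X, (⟪prev X, neighborSum e cur X⟫_𝕜 - ⟪neighborSum e cur X, prev X⟫_𝕜) :=
      tsum_congr fun X => by rw [hL X]; exact inner_sub_inner_real_smul_add (r X) (next X) (prev X)
  _ = ∑' X, ⟪prev X, neighborSum e cur X⟫_𝕜 - ∑' X, ⟪neighborSum e cur X, prev X⟫_𝕜 :=
      (summable_inner_neighborSum_right (𝕜 := 𝕜) e hprev hcur).tsum_sub
        (summable_inner_neighborSum_left e hcur hprev)
  _ = ∑' X, ⟪neighborSum e prev X, cur X⟫_𝕜 - ∑' X, ⟪cur X, neighborSum e prev X⟫_𝕜 := by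
      rw [tsum_inner_neighborSum_left e hprev hcur, tsum_inner_neighborSum_left e hcur hprev]
  _ = _ :=
      ((summable_inner_neighborSum_left (𝕜 := 𝕜) e hprev hcur).tsum_sub
        (summable_inner_neighborSum_right e hcur hprev)).symm

end NeighborSum

theorem stmt14_general (n N : ℕ) (hn : 1 ≤ n)
    (τ ε : ℝ)
    (B : (Fin n → ℤ) → ℝ → ℝ → ℝ)
    (ψ : ℤ → (Fin n → ℤ) → EuclideanSpace ℂ (Fin N))
    (hl2 : ∀ t : ℤ, Summable fun X : Fin n → ℤ => ‖ψ t X‖ ^ 2)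
    (hscheme : ∀ (t : ℤ) (X : Fin n → ℤ),
      (1 + τ ^ 2 * B X (‖ψ (t + 1) X‖ ^ 2) (‖ψ (t - 1) X‖ ^ 2))
          • (ψ (t + 1) X + ψ (t - 1) X)
        = ((n : ℝ)⁻¹) • ∑ j : Fin n,
            (ψ t (X + Pi.single j 1) + ψ t (X - Pi.single j 1)))
    (Q : ℤ → ℂ)
    (hQ : ∀ t : ℤ, Q t = Complex.I * (ε ^ n / (4 * τ)) *
      ∑' X : Fin n → ℤ, ∑ j : Fin n,
        ((inner ℂ (ψ t (X + Pi.single j 1)) (ψ (t + 1) X) : ℂ)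
          + (inner ℂ (ψ t (X - Pi.single j 1)) (ψ (t + 1) X) : ℂ)
          - (inner ℂ (ψ (t + 1) X) (ψ t (X + Pi.single j 1)) : ℂ)
          - (inner ℂ (ψ (t + 1) X) (ψ t (X - Pi.single j 1)) : ℂ))) :
    ∀ t : ℤ, Q t = Q (t - 1) := by
  intro t
  have hn0 : (n : ℝ) ≠ 0 := Nat.cast_ne_zero.mpr (by omega)
  have hL (X : Fin n → ℤ) : neighborSum (fun j => Pi.single j 1) (ψ t) X
      = ((n * (1 + τ ^ 2 * B X (‖ψ (t + 1) X‖ ^ 2) (‖ψ (t - 1) X‖ ^ 2)) : ℝ) : ℂ)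
          • (ψ (t + 1) X + ψ (t - 1) X) := by
    rw [Complex.coe_smul, ← smul_smul, hscheme t X, smul_inv_smul₀ hn0]
    rfl
  have hQL (s : ℤ) : Q s = Complex.I * (ε ^ n / (4 * τ)) *
      ∑' X, (⟪neighborSum (fun j => Pi.single j 1) (ψ s) X, ψ (s + 1) X⟫_ℂ
        - ⟪ψ (s + 1) X, neighborSum (fun j => Pi.single j 1) (ψ s) X⟫_ℂ) := by
    rw [hQ]
    exact congrArg _ (tsum_congr fun X => sum_inner_sub_inner_eq_neighborSum _ _ _ X)
  rw [hQL, hQL, sub_add_cancel,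
    tsum_charge_eq_of_neighborSum_eq_smul _ (hl2 (t - 1)) (hl2 t) _ hL]

theorem stmt14 (n N : ℕ) (hn : 1 ≤ n) (hN : 1 ≤ N)
    (τ ε : ℝ) (hτ : 0 < τ) (hε : 0 < ε)
    (hratio : τ / ε = 1 / Real.sqrt n)
    (B : (Fin n → ℤ) → ℝ → ℝ → ℝ)
    (ψ : ℤ → (Fin n → ℤ) → EuclideanSpace ℂ (Fin N))
    (hl2 : ∀ t : ℤ, Summable fun X : Fin n → ℤ => ‖ψ t X‖ ^ 2)
    (hscheme : ∀ (t : ℤ) (X : Fin n → ℤ),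
      (1 + τ ^ 2 * B X (‖ψ (t + 1) X‖ ^ 2) (‖ψ (t - 1) X‖ ^ 2))
          • (ψ (t + 1) X + ψ (t - 1) X)
        = ((n : ℝ)⁻¹) • ∑ j : Fin n,
            (ψ t (X + Pi.single j 1) + ψ t (X - Pi.single j 1)))
    (Q : ℤ → ℂ)
    (hQ : ∀ t : ℤ, Q t = Complex.I * (ε ^ n / (4 * τ)) *
      ∑' X : Fin n → ℤ, ∑ j : Fin n,
        ((inner ℂ (ψ t (X + Pi.single j 1)) (ψ (t + 1) X) : ℂ)
          + (inner ℂ (ψ t (X - Pi.single j 1)) (ψ (t + 1) X) : ℂ)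
          - (inner ℂ (ψ (t + 1) X) (ψ t (X + Pi.single j 1)) : ℂ)
          - (inner ℂ (ψ (t + 1) X) (ψ t (X - Pi.single j 1)) : ℂ))) :
    ∀ t : ℤ, Q t = Q (t - 1) :=
  stmt14_general n N hn τ ε B ψ hl2 hscheme Q hQ
end

section
/- Let B : ℝ×ℝ → ℝ be C¹ in its first argument, and suppose there is κ > 0 such that 1 + τ²[B(λ,μ) + 2∂_λB(λ,μ)(λ ± √(λμ))] ≥ κ for all λ, μ ≥ 0 and both signs ±. Then for every ψ⁻ ∈ ℂ^N and every ξ ∈ ℂ^N with ξ ≠ 0, the equation f(s) = 1, where f(s) = (1 + τ² B(|sξ − ψ⁻|², |ψ⁻|²))·s, has exactly one real solution s. -/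
/-!
Write `λ(s) = ‖s ξ - ψ‖²` and `μ = ‖ψ‖²`. The map `f(s) = (1 + c g(λ(s))) s` has derivative
`1 + c (g λ + 2 g'(λ) (λ + re ⟪s ξ - ψ, ψ⟫))`, and by Cauchy–Schwarz the inner product lies in
`[-√(λμ), √(λμ)]`. The derivative is affine in it, so the bounds assumed at the two endpoints
give `f' ≥ κ > 0`; then `f - κ s` is monotone, and `f` is a strictly increasing bijection of `ℝ`.
-/

open Filter RCLike

theorem surjective_of_hasDerivAt_ge {f f' : ℝ → ℝ} {κ : ℝ} (hκ : 0 < κ)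
    (hf : ∀ x, HasDerivAt f (f' x) x) (hf' : ∀ x, κ ≤ f' x) : Function.Surjective f := by
  have hmono : Monotone fun x => f x - κ * x :=
    monotone_of_hasDerivAt_nonneg (fun x => (hf x).sub ((hasDerivAt_id x).const_mul κ))
      fun x => by simpa using hf' x
  have hcont : Continuous f := continuous_iff_continuousAt.2 fun x => (hf x).continuousAt
  refine hcont.surjective ?_ ?_
  · refine tendsto_atTop_mono' atTop ?_
      (tendsto_atTop_add_const_left atTop (f 0) (tendsto_id.const_mul_atTop hκ))
    filter_upwards [eventually_ge_atTop 0] with x hx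
    have := hmono hx
    simp only [id_eq, mul_zero, sub_zero] at this ⊢
    linarith
  · refine tendsto_atBot_mono' atBot ?_
      (tendsto_atBot_add_const_left atBot (f 0) (tendsto_id.const_mul_atBot hκ))
    filter_upwards [eventually_le_atBot 0] with x hx
    have := hmono hx
    simp only [id_eq, mul_zero, sub_zero] at this ⊢
    linarith

theorem bijective_of_hasDerivAt_ge {f f' : ℝ → ℝ} {κ : ℝ} (hκ : 0 < κ)
    (hf : ∀ x, HasDerivAt f (f' x) x) (hf' : ∀ x, κ ≤ f' x) : Function.Bijective f :=
  ⟨(strictMono_of_hasDerivAt_pos hf fun x => hκ.trans_le (hf' x)).injective,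
    surjective_of_hasDerivAt_ge hκ hf hf'⟩

theorem le_add_mul_of_abs_le {κ a b q r : ℝ} (hr : |r| ≤ q) (hneg : κ ≤ a + b * -q)
    (hpos : κ ≤ a + b * q) : κ ≤ a + b * r := by
  obtain ⟨hr₁, hr₂⟩ := abs_le.mp hr
  rcases le_total 0 b with hb | hb
  · nlinarith
  · nlinarith

section InnerProductSpace

variable {𝕜 E : Type*} [RCLike 𝕜] [NormedAddCommGroup E] [InnerProductSpace 𝕜 E]

local notation "⟪" x ", " y "⟫" => inner 𝕜 x y

theorem norm_ofReal_smul_sub_sq (ξ ψ : E) (s : ℝ) :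
    ‖(s : 𝕜) • ξ - ψ‖ ^ 2 = ‖ξ‖ ^ 2 * s ^ 2 - 2 * s * re ⟪ξ, ψ⟫ + ‖ψ‖ ^ 2 := by
  rw [@norm_sub_sq 𝕜, norm_smul, inner_smul_left]
  simp only [norm_ofReal, conj_ofReal, re_ofReal_mul, sq_abs, mul_pow]
  ring

theorem hasDerivAt_norm_ofReal_smul_sub_sq (ξ ψ : E) (s : ℝ) :
    HasDerivAt (fun t : ℝ => ‖(t : 𝕜) • ξ - ψ‖ ^ 2) (2 * re ⟪(s : 𝕜) • ξ - ψ, ξ⟫) s := by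
  have hpoly : HasDerivAt (fun t : ℝ => ‖ξ‖ ^ 2 * t ^ 2 - 2 * t * re ⟪ξ, ψ⟫ + ‖ψ‖ ^ 2)
      (‖ξ‖ ^ 2 * (2 * s) - 2 * re ⟪ξ, ψ⟫) s := by
    simpa using (((hasDerivAt_pow 2 s).const_mul (‖ξ‖ ^ 2)).sub
      (((hasDerivAt_id s).const_mul 2).mul_const (re ⟪ξ, ψ⟫))).add_const (‖ψ‖ ^ 2)
  convert hpoly using 1
  · exact funext (norm_ofReal_smul_sub_sq ξ ψ)
  · rw [inner_sub_left, inner_smul_left, map_sub, conj_ofReal, re_ofReal_mul,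
      @inner_self_eq_norm_sq 𝕜, inner_re_symm]
    ring

/-- In the paper's notation `ψ⁺ = s ξ - ψ⁻`, both sides equal `‖ψ⁺ + ψ⁻ / 2‖² - ‖ψ⁻‖² / 4`. -/
theorem mul_re_inner_ofReal_smul_sub (ξ ψ : E) (s : ℝ) :
    s * re ⟪(s : 𝕜) • ξ - ψ, ξ⟫ = ‖(s : 𝕜) • ξ - ψ‖ ^ 2 + re ⟪(s : 𝕜) • ξ - ψ, ψ⟫ := by
  rw [← re_ofReal_mul, ← inner_smul_right, ← @inner_self_eq_norm_sq 𝕜, ← map_add,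
    ← inner_add_right, sub_add_cancel]

theorem abs_re_inner_le_sqrt (v ψ : E) : |re ⟪v, ψ⟫| ≤ √(‖v‖ ^ 2 * ‖ψ‖ ^ 2) := by
  rw [← mul_pow, Real.sqrt_sq (by positivity)]
  exact (abs_re_le_norm _).trans (norm_inner_le_norm _ _)

theorem hasDerivAt_one_add_mul_comp_norm_ofReal_smul_sub_sq_mul {g : ℝ → ℝ} (c : ℝ)
    (ξ ψ : E) (s : ℝ) (hg : DifferentiableAt ℝ g (‖(s : 𝕜) • ξ - ψ‖ ^ 2)) :
    HasDerivAt (fun t : ℝ => (1 + c * g (‖(t : 𝕜) • ξ - ψ‖ ^ 2)) * t)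
      (1 + c * (g (‖(s : 𝕜) • ξ - ψ‖ ^ 2) + 2 * deriv g (‖(s : 𝕜) • ξ - ψ‖ ^ 2) *
        (‖(s : 𝕜) • ξ - ψ‖ ^ 2 + re ⟪(s : 𝕜) • ξ - ψ, ψ⟫))) s := by
  refine ((((hg.hasDerivAt.comp s (hasDerivAt_norm_ofReal_smul_sub_sq ξ ψ s)).const_mul
    c).const_add 1).mul (hasDerivAt_id' s)).congr_deriv ?_
  rw [← mul_re_inner_ofReal_smul_sub, Function.comp_apply]
  ring

theorem existsUnique_one_add_mul_comp_norm_ofReal_smul_sub_sq_mul_eq {g : ℝ → ℝ} {c κ : ℝ}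
    (hκ : 0 < κ) (ξ ψ : E) (hg : Differentiable ℝ g)
    (hlow : ∀ l, 0 ≤ l →
      κ ≤ 1 + c * (g l + 2 * deriv g l * (l - √(l * ‖ψ‖ ^ 2))) ∧
      κ ≤ 1 + c * (g l + 2 * deriv g l * (l + √(l * ‖ψ‖ ^ 2)))) (y : ℝ) :
    ∃! s : ℝ, (1 + c * g (‖(s : 𝕜) • ξ - ψ‖ ^ 2)) * s = y := by
  refine (bijective_of_hasDerivAt_ge hκ
    (fun s => hasDerivAt_one_add_mul_comp_norm_ofReal_smul_sub_sq_mul (𝕜 := 𝕜) c ξ ψ s (hg _))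
    fun s => ?_).existsUnique y
  obtain ⟨hneg, hpos⟩ := hlow (‖(s : 𝕜) • ξ - ψ‖ ^ 2) (by positivity)
  set l := ‖(s : 𝕜) • ξ - ψ‖ ^ 2
  set d := deriv g l
  have := le_add_mul_of_abs_le (κ := κ) (a := 1 + c * (g l + 2 * d * l)) (b := 2 * c * d)
    (abs_re_inner_le_sqrt (𝕜 := 𝕜) ((s : 𝕜) • ξ - ψ) ψ) (by linarith) (by linarith)
  linarith

end InnerProductSpace

theorem stmt15_general (N : ℕ) (τ : ℝ)
    (B : ℝ → ℝ → ℝ) (hB1 : ∀ m : ℝ, ContDiff ℝ 1 (fun l => B l m))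
    (κ : ℝ) (hκ : 0 < κ)
    (hlow : ∀ l m : ℝ, 0 ≤ l → 0 ≤ m →
      κ ≤ 1 + τ ^ 2 * (B l m
          + 2 * deriv (fun x => B x m) l * (l - Real.sqrt (l * m))) ∧
      κ ≤ 1 + τ ^ 2 * (B l m
          + 2 * deriv (fun x => B x m) l * (l + Real.sqrt (l * m))))
    (ψm ξ : EuclideanSpace ℂ (Fin N)) :
    ∃! s : ℝ, (1 + τ ^ 2 * B (‖(s : ℂ) • ξ - ψm‖ ^ 2) (‖ψm‖ ^ 2)) * s = 1 :=
  existsUnique_one_add_mul_comp_norm_ofReal_smul_sub_sq_mul_eq (𝕜 := ℂ) hκ ξ ψm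
    ((hB1 _).differentiable one_ne_zero) (fun l hl => hlow l _ hl (by positivity)) 1

theorem stmt15 (N : ℕ) (hN : 1 ≤ N) (τ : ℝ) (hτ : 0 < τ)
    (B : ℝ → ℝ → ℝ) (hB1 : ∀ m : ℝ, ContDiff ℝ 1 (fun l => B l m))
    (κ : ℝ) (hκ : 0 < κ)
    (hlow : ∀ l m : ℝ, 0 ≤ l → 0 ≤ m →
      κ ≤ 1 + τ ^ 2 * (B l m
          + 2 * deriv (fun x => B x m) l * (l - Real.sqrt (l * m))) ∧
      κ ≤ 1 + τ ^ 2 * (B l m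
          + 2 * deriv (fun x => B x m) l * (l + Real.sqrt (l * m))))
    (ψm ξ : EuclideanSpace ℂ (Fin N)) (hξ : ξ ≠ 0) :
    ∃! s : ℝ, (1 + τ ^ 2 * B (‖(s : ℂ) • ξ - ψm‖ ^ 2) (‖ψm‖ ^ 2)) * s = 1 :=
  stmt15_general N τ B hB1 κ hκ hlow ψm ξ
end
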